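/- Let S be an E-Ehresmann semigroup. The set Reg_E(S) = {a ∈ S : a R a⁺ and a L a*} (Green's relations) is an inverse subsemigroup of S whose set of idempotents is exactly E. -/

import Mathlib

/-- An E-Ehresmann semigroup as a (2,1,1)-algebra. -/
class EhresmannSemigroup (S : Type*) extends Semigroup S where
  plus : S → S
  estar : S → S
  plus_mul_self : ∀ x : S, plus x * x = x
  plus_prod_idem : ∀ x y : S, plus (plus x * plus y) = plus x * plus y
  plus_comm : ∀ x y : S, plus x * plus y = plus y * plus x
  plus_absorb : ∀ x y : S, plus x * plus (x * y) = plus (x * y)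
  plus_mul_plus : ∀ x y : S, plus (x * y) = plus (x * plus y)
  mul_estar_self : ∀ x : S, x * estar x = x
  estar_prod_idem : ∀ x y : S, estar (estar x * estar y) = estar x * estar y
  estar_comm : ∀ x y : S, estar x * estar y = estar y * estar x
  estar_absorb : ∀ x y : S, estar (x * y) * estar y = estar (x * y)
  estar_mul_estar : ∀ x y : S, estar (x * y) = estar (estar x * y)
  estar_plus : ∀ x : S, estar (plus x) = plus x
  plus_estar : ∀ x : S, plus (estar x) = estar x

open EhresmannSemigroup

/-- The distinguished semilattice `E` of an `E`-Ehresmann semigroup. -/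
def eE (S : Type*) [EhresmannSemigroup S] : Set S := Set.range (plus : S → S)

/-- The partial order `≤_r` : `a ≤_r b` iff `a = a⁺ b`. -/
def leR {S : Type*} [EhresmannSemigroup S] (a b : S) : Prop := a = plus a * b

/-- The partial order `≤_l` : `a ≤_l b` iff `a = b a*`. -/
def leL {S : Type*} [EhresmannSemigroup S] (a b : S) : Prop := a = b * estar a

/-- Green's `R` relation on a semigroup. -/
def rRel {S : Type*} [Semigroup S] (a b : S) : Prop :=
  (a = b ∨ ∃ x, a * x = b) ∧ (b = a ∨ ∃ x, b * x = a)

/-- Green's `L` relation on a semigroup. -/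
def lRel {S : Type*} [Semigroup S] (a b : S) : Prop :=
  (a = b ∨ ∃ x, x * a = b) ∧ (b = a ∨ ∃ x, x * b = a)

/-- Green's `D` relation on a semigroup. -/
def dRel {S : Type*} [Semigroup S] (a b : S) : Prop := ∃ c, rRel a c ∧ lRel c b

/-- The set `Reg_E(S)` of elements corresponding to invertible morphisms. -/
def regE (S : Type*) [EhresmannSemigroup S] : Set S :=
  {a | rRel a (plus a) ∧ lRel a (estar a)}

/-- `C(a)` is an invertible morphism of the associated Ehresmann category. -/
def invertibleC {S : Type*} [EhresmannSemigroup S] (a : S) : Prop :=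
  ∃ b, plus b = estar a ∧ estar b = plus a ∧ a * b = plus a ∧ b * a = estar a

open EhresmannSemigroup

/-! Every `a ∈ Reg_E(S)` has an inverse `b` with `ab = a⁺` and `ba = a*`, and such an inverse
lies in `Reg_E(S)` again. For `e ∈ E`, the element `b (ae)⁺` witnesses `ae R (ae)⁺`, because its
`⁺` is `a* e`; dually on the left. Since `(ac)⁺ = (ac⁺)⁺` and `(ac)* = (a*c)*`, this gives closure
under products. An idempotent `a ∈ Reg_E(S)` satisfies `a a⁺ = a⁺` and `a* a = a*`, so
`a = a a* a⁺ a = a⁺ a*` lies in `E`. Thus the idempotents of `Reg_E(S)` form the commutative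
semilattice `E`, and commuting idempotents make inverses unique. -/

theorem eq_of_inverses_of_commute {M : Type*} [Semigroup M] {a x y : M}
    (hx : a * x * a = a) (hx' : x * a * x = x) (hy : a * y * a = a) (hy' : y * a * y = y)
    (hl : Commute (x * a) (y * a)) (hr : Commute (a * x) (a * y)) : x = y :=
  calc x = x * a * x := hx'.symm
    _ = x * (a * y * a) * x := by rw [hy]
    _ = (x * a * (y * a)) * x := by simp only [mul_assoc]
    _ = (y * a * (x * a)) * x := by rw [hl.eq]
    _ = y * (a * x * a) * x := by simp only [mul_assoc]
    _ = y * (a * y * a) * x := by rw [hx, hy]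
    _ = y * (a * y * (a * x)) := by simp only [mul_assoc]
    _ = y * (a * x * (a * y)) := by rw [hr.eq]
    _ = y * (a * x * a) * y := by simp only [mul_assoc]
    _ = y := by rw [hx, hy']

namespace EhresmannSemigroup

variable {S : Type*} [EhresmannSemigroup S] {a b c d e f : S}

theorem plus_mul_plus_self (x : S) : plus x * plus x = plus x := by
  simpa only [mul_estar_self] using plus_absorb x (estar x)

theorem plus_plus (x : S) : plus (plus x) = plus x := by
  simpa only [plus_mul_plus_self] using plus_prod_idem x x

theorem plus_mem_eE (x : S) : plus x ∈ eE S := ⟨x, rfl⟩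

theorem estar_mem_eE (x : S) : estar x ∈ eE S := ⟨estar x, plus_estar x⟩

theorem plus_of_mem_eE (he : e ∈ eE S) : plus e = e := by
  obtain ⟨w, rfl⟩ := he
  exact plus_plus w

theorem estar_of_mem_eE (he : e ∈ eE S) : estar e = e := by
  obtain ⟨w, rfl⟩ := he
  exact estar_plus w

theorem mul_self_of_mem_eE (he : e ∈ eE S) : e * e = e := by
  obtain ⟨w, rfl⟩ := he
  exact plus_mul_plus_self w

theorem commute_of_mem_eE (he : e ∈ eE S) (hf : f ∈ eE S) : Commute e f := by
  obtain ⟨w, rfl⟩ := he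
  obtain ⟨v, rfl⟩ := hf
  exact plus_comm w v

theorem mul_mem_eE (he : e ∈ eE S) (hf : f ∈ eE S) : e * f ∈ eE S := by
  obtain ⟨w, rfl⟩ := he
  obtain ⟨v, rfl⟩ := hf
  exact ⟨plus w * plus v, plus_prod_idem w v⟩

theorem mem_regE_iff : a ∈ regE S ↔ (∃ x, a * x = plus a) ∧ ∃ y, y * a = estar a := by
  constructor
  · rintro ⟨⟨hr | hr, -⟩, ⟨hl | hl, -⟩⟩
    · exact ⟨⟨estar a, by rw [mul_estar_self, ← hr]⟩, ⟨plus a, by rw [plus_mul_self, ← hl]⟩⟩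
    · exact ⟨⟨estar a, by rw [mul_estar_self, ← hr]⟩, hl⟩
    · exact ⟨hr, ⟨plus a, by rw [plus_mul_self, ← hl]⟩⟩
    · exact ⟨hr, hl⟩
  · rintro ⟨hr, hl⟩
    exact ⟨⟨Or.inr hr, Or.inr ⟨a, plus_mul_self a⟩⟩, ⟨Or.inr hl, Or.inr ⟨a, mul_estar_self a⟩⟩⟩

theorem exists_inverse_of_mem_regE (ha : a ∈ regE S) :
    ∃ b, a * b = plus a ∧ b * a = estar a ∧ b * a * b = b := by
  obtain ⟨⟨x, hx⟩, ⟨y, hy⟩⟩ := mem_regE_iff.mp ha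
  obtain ⟨b₀, hab₀, hba₀⟩ : ∃ b₀, a * b₀ = plus a ∧ b₀ * a = estar a := by
    refine ⟨y * a * x, ?_, ?_⟩
    · calc a * (y * a * x) = a * (y * a) * x := by simp only [mul_assoc]
        _ = plus a := by rw [hy, mul_estar_self, hx]
    · calc y * a * x * a = y * (a * x) * a := by simp only [mul_assoc]
        _ = estar a := by rw [hx, mul_assoc, plus_mul_self, hy]
  have hE := mul_self_of_mem_eE (estar_mem_eE a)
  refine ⟨b₀ * a * b₀, ?_, ?_, ?_⟩
  · rw [← mul_assoc, ← mul_assoc, hab₀, plus_mul_self, hab₀]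
  · rw [mul_assoc, hba₀, hE]
  · calc b₀ * a * b₀ * a * (b₀ * a * b₀) = b₀ * a * (b₀ * a) * (b₀ * a) * b₀ := by
          simp only [mul_assoc]
      _ = b₀ * a * b₀ := by rw [hba₀, hE, hE]

theorem plus_eq_estar_of_inverse (hba : b * a = estar a) (hbab : b * a * b = b) :
    plus b = estar a := by
  have hb : estar a * b = b := by rw [← hba, hbab]
  have h₁ : estar a * plus b = plus b := by
    simpa only [hb, plus_estar] using plus_absorb (estar a) b
  have h₂ : plus b * estar a = estar a := by
    simpa only [hba, plus_estar] using plus_absorb b a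
  calc plus b = estar a * plus b := h₁.symm
    _ = plus b * estar a := (commute_of_mem_eE (estar_mem_eE a) (plus_mem_eE b)).eq
    _ = estar a := h₂

theorem estar_eq_plus_of_inverse (hab : a * b = plus a) (hbab : b * a * b = b) :
    estar b = plus a := by
  have hb : b * plus a = b := by rw [← hab, ← mul_assoc, hbab]
  have h₁ : estar b * plus a = estar b := by
    simpa only [hb, estar_plus] using estar_absorb b (plus a)
  have h₂ : plus a * estar b = plus a := by
    simpa only [hab, estar_plus] using estar_absorb a b
  calc estar b = estar b * plus a := h₁.symm
    _ = plus a * estar b := (commute_of_mem_eE (estar_mem_eE b) (plus_mem_eE a)).eq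
    _ = plus a := h₂

theorem mem_regE_of_inverse (hab : a * b = plus a) (hba : b * a = estar a)
    (hbab : b * a * b = b) : b ∈ regE S :=
  mem_regE_iff.mpr ⟨⟨a, hba.trans (plus_eq_estar_of_inverse hba hbab).symm⟩,
    ⟨a, hab.trans (estar_eq_plus_of_inverse hab hbab).symm⟩⟩

theorem exists_mul_mul_eq_plus (hab : a * b = plus a) (hba : b * a = estar a) (hf : f ∈ eE S) :
    ∃ x, a * f * x = plus (a * f) := by
  have hu : plus (b * plus (a * f)) = estar a * f := by
    rw [← plus_mul_plus, ← mul_assoc, hba]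
    exact plus_of_mem_eE (mul_mem_eE (estar_mem_eE a) hf)
  have hfu : estar a * f * (b * plus (a * f)) = b * plus (a * f) := by
    rw [← hu, plus_mul_self]
  refine ⟨b * plus (a * f), ?_⟩
  calc a * f * (b * plus (a * f)) = a * estar a * f * (b * plus (a * f)) := by
        rw [mul_estar_self]
    _ = a * (estar a * f * (b * plus (a * f))) := by simp only [mul_assoc]
    _ = a * b * plus (a * f) := by rw [hfu, mul_assoc]
    _ = plus (a * f) := by rw [hab, plus_absorb]

theorem exists_mul_mul_eq_estar (hcd : c * d = plus c) (hdc : d * c = estar c) (he : e ∈ eE S) :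
    ∃ y, y * (e * c) = estar (e * c) := by
  have hv : estar (estar (e * c) * d) = e * plus c := by
    rw [← estar_mul_estar, mul_assoc, hcd]
    exact estar_of_mem_eE (mul_mem_eE he (plus_mem_eE c))
  have hve : estar (e * c) * d * (e * plus c) = estar (e * c) * d := by
    rw [← hv, mul_estar_self]
  refine ⟨estar (e * c) * d, ?_⟩
  calc estar (e * c) * d * (e * c) = estar (e * c) * d * (e * (plus c * c)) := by
        rw [plus_mul_self]
    _ = estar (e * c) * d * (e * plus c) * c := by simp only [mul_assoc]
    _ = estar (e * c) * (d * c) := by rw [hve, mul_assoc]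
    _ = estar (e * c) := by rw [hdc, estar_absorb]

theorem mul_mem_regE (ha : a ∈ regE S) (hc : c ∈ regE S) : a * c ∈ regE S := by
  obtain ⟨b, hab, hba, -⟩ := exists_inverse_of_mem_regE ha
  obtain ⟨d, hcd, hdc, -⟩ := exists_inverse_of_mem_regE hc
  obtain ⟨x, hx⟩ := exists_mul_mul_eq_plus hab hba (plus_mem_eE c)
  obtain ⟨y, hy⟩ := exists_mul_mul_eq_estar hcd hdc (estar_mem_eE a)
  refine mem_regE_iff.mpr ⟨⟨d * x, ?_⟩, ⟨y * b, ?_⟩⟩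
  · calc a * c * (d * x) = a * (c * d) * x := by simp only [mul_assoc]
      _ = plus (a * c) := by rw [hcd, hx, ← plus_mul_plus]
  · calc y * b * (a * c) = y * (b * a * c) := by simp only [mul_assoc]
      _ = estar (a * c) := by rw [hba, hy, ← estar_mul_estar]

theorem mem_eE_of_mem_regE_of_mul_self (ha : a ∈ regE S) (haa : a * a = a) : a ∈ eE S := by
  obtain ⟨⟨x, hx⟩, ⟨y, hy⟩⟩ := mem_regE_iff.mp ha
  have h₁ : a * plus a = plus a := by rw [← hx, ← mul_assoc, haa]
  have h₂ : estar a * a = estar a := by rw [← hy, mul_assoc, haa]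
  have key : a = plus a * estar a :=
    calc a = a * estar a * (plus a * a) := by rw [mul_estar_self, plus_mul_self, haa]
      _ = a * (estar a * plus a) * a := by simp only [mul_assoc]
      _ = a * (plus a * estar a) * a := by
        rw [(commute_of_mem_eE (estar_mem_eE a) (plus_mem_eE a)).eq]
      _ = a * plus a * (estar a * a) := by simp only [mul_assoc]
      _ = plus a * estar a := by rw [h₁, h₂]
  rw [key]
  exact mul_mem_eE (plus_mem_eE a) (estar_mem_eE a)

theorem mul_mem_eE_of_mem_regE (ha : a ∈ regE S) (hb : b ∈ regE S) (haba : a * b * a = a) :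
    a * b ∈ eE S :=
  mem_eE_of_mem_regE_of_mul_self (mul_mem_regE ha hb) (by rw [← mul_assoc, haba])

theorem mem_regE_of_mem_eE (he : e ∈ eE S) : e ∈ regE S :=
  mem_regE_iff.mpr ⟨⟨e, by rw [plus_of_mem_eE he, mul_self_of_mem_eE he]⟩,
    ⟨e, by rw [estar_of_mem_eE he, mul_self_of_mem_eE he]⟩⟩

end EhresmannSemigroup

/-- In an E-Ehresmann semigroup `S`, the set
`Reg_E(S) = {a | a R a⁺ and a L a*}` is an inverse subsemigroup of `S`
(closed under multiplication, every element has a unique inverse lying in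
`Reg_E(S)`) whose set of idempotents is exactly `E`. -/
theorem regE_inverse_subsemigroup (S : Type*) [EhresmannSemigroup S] :
    (∀ a ∈ regE S, ∀ b ∈ regE S, a * b ∈ regE S) ∧
    (∀ a ∈ regE S, ∃! b : S, b ∈ regE S ∧ a * b * a = a ∧ b * a * b = b) ∧
    {a | a ∈ regE S ∧ a * a = a} = eE S := by
  refine ⟨fun a ha c hc => mul_mem_regE ha hc, fun a ha => ?_, ?_⟩
  · obtain ⟨b, hab, hba, hbab⟩ := exists_inverse_of_mem_regE ha
    have hb : b ∈ regE S := mem_regE_of_inverse hab hba hbab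
    have haba : a * b * a = a := by rw [hab, plus_mul_self]
    refine ⟨b, ⟨hb, haba, hbab⟩, fun c ⟨hc, haca, hcac⟩ => ?_⟩
    exact eq_of_inverses_of_commute haca hcac haba hbab
      (commute_of_mem_eE (mul_mem_eE_of_mem_regE hc ha hcac) (mul_mem_eE_of_mem_regE hb ha hbab))
      (commute_of_mem_eE (mul_mem_eE_of_mem_regE ha hc haca) (mul_mem_eE_of_mem_regE ha hb haba))
  · ext x
    exact ⟨fun ⟨hx, hxx⟩ => mem_eE_of_mem_regE_of_mul_self hx hxx,
      fun hx => ⟨mem_regE_of_mem_eE hx, mul_self_of_mem_eE hx⟩⟩
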